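/- arXiv:2410.01372 — 6 statements merged into one kernel-verified Lean document; each statement's English description precedes it below -/
import Mathlib

section
/- Let R1, R2 > 0, w, t1, t2, t3, t4 be real numbers, and let A be the 4×4 real matrix with rows ((0, (w t1 - t4)/R1, 0, -t3/R1), (-(w t1 - t4)/R1, 0, t3/R1, 0), (0, t3/R2, 0, (w t2 + t4)/R2), (-t3/R2, 0, -(w t2 + t4)/R2, 0)). If t4 = (w(t1 R2 - t2 R1) + 2 t3 √(R1 R2))/(R1 + R2), then the characteristic polynomial of A equals (λ² + α²)², where α = (w(t1+t2)√(R1 R2) + t3(R1 - R2))/(√(R1 R2)(R1+R2)). -/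
open Matrix Polynomial

/-!
At the bifurcation value the two diagonal couplings `a = (w t1 - t4)/R1` and `d = (w t2 + t4)/R2`
differ by `2k` with `k = t3/√(R1 R2)`, while the off-diagonal couplings satisfy `(t3/R1)(t3/R2) = k²`.
For matrices of this shape the characteristic polynomial is `X⁴ + (a² + d² - 2bc) X² + (ad + bc)²`,
and these two relations make it the square of `X² + (a + k)²`; finally `a + k = α`.
-/

theorem charpoly_fin_four_hamiltonian {R : Type*} [CommRing R] (a b c d : R) :
    (!![0, a, 0, -b; -a, 0, b, 0; 0, c, 0, d; -c, 0, -d, 0] : Matrix (Fin 4) (Fin 4) R).charpoly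
      = X ^ 4 + C (a ^ 2 + d ^ 2 - 2 * b * c) * X ^ 2 + C ((a * d + b * c) ^ 2) := by
  simp [Matrix.charpoly, det_succ_row_zero, Fin.sum_univ_succ, Fin.succAbove, map_ofNat]
  ring

theorem charpoly_fin_four_hamiltonian_eq_sq {R : Type*} [CommRing R] (a b c k : R)
    (hbc : b * c = k ^ 2) :
    (!![0, a, 0, -b; -a, 0, b, 0; 0, c, 0, a + 2 * k; -c, 0, -(a + 2 * k), 0] :
        Matrix (Fin 4) (Fin 4) R).charpoly
      = (X ^ 2 + C ((a + k) ^ 2)) ^ 2 := by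
  rw [charpoly_fin_four_hamiltonian, mul_assoc 2 b c, hbc]
  have hlin : a ^ 2 + (a + 2 * k) ^ 2 - 2 * k ^ 2 = 2 * (a + k) ^ 2 := by ring
  have hconst : a * (a + 2 * k) + k ^ 2 = (a + k) ^ 2 := by ring
  rw [hlin, hconst]
  simp only [C_mul, C_pow, map_ofNat]
  ring

theorem stmt0 (R1 R2 w t1 t2 t3 t4 : ℝ) (hR1 : 0 < R1) (hR2 : 0 < R2)
    (ht4 : t4 = (w * (t1 * R2 - t2 * R1) + 2 * t3 * Real.sqrt (R1 * R2)) / (R1 + R2)) :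
    (!![0, (w * t1 - t4) / R1, 0, -t3 / R1;
        -(w * t1 - t4) / R1, 0, t3 / R1, 0;
        0, t3 / R2, 0, (w * t2 + t4) / R2;
        -t3 / R2, 0, -(w * t2 + t4) / R2, 0] : Matrix (Fin 4) (Fin 4) ℝ).charpoly
      = (X ^ 2 + C (((w * (t1 + t2) * Real.sqrt (R1 * R2) + t3 * (R1 - R2)) /
          (Real.sqrt (R1 * R2) * (R1 + R2))) ^ 2)) ^ 2 := by
  set s := Real.sqrt (R1 * R2)
  have hs : s ^ 2 = R1 * R2 := Real.sq_sqrt (by positivity)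
  have hs0 : s ≠ 0 := (Real.sqrt_pos.2 (by positivity)).ne'
  have hR12 : R1 + R2 ≠ 0 := by positivity
  have ht4' : (R1 + R2) * t4 = w * (t1 * R2 - t2 * R1) + 2 * t3 * s := by
    rw [ht4]; field_simp
  have hd : (w * t2 + t4) / R2 = (w * t1 - t4) / R1 + 2 * (t3 / s) := by
    field_simp
    linear_combination s * ht4' + 2 * t3 * hs
  have hbc : t3 / R1 * (t3 / R2) = (t3 / s) ^ 2 := by
    rw [div_pow, hs]; field_simp
  have hα : (w * t1 - t4) / R1 + t3 / s
      = (w * (t1 + t2) * s + t3 * (R1 - R2)) / (s * (R1 + R2)) := by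
    field_simp
    linear_combination (-s) * ht4' - 2 * t3 * hs
  simp only [neg_div]
  rw [hd, charpoly_fin_four_hamiltonian_eq_sq _ _ _ _ hbc, hα]
end

section
/- Under the hypotheses of the previous setup, the semisimple and nilpotent parts are explicitly: S is the block matrix with S[1,2] = α, S[2,1] = -α, S[3,4] = α, S[4,3] = -α and all other entries zero; and N has entries N[1,2] = -t3/√(R1 R2), N[2,1] = t3/√(R1 R2), N[1,4] = -t3/R1, N[2,3] = t3/R1, N[3,2] = t3/R2, N[4,1] = -t3/R2, N[3,4] = t3/√(R1 R2), N[4,3] = -t3/√(R1 R2), and zero elsewhere. Then A = S + N, SN = NS, and N² = 0. -/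
/-!
All three matrices have the form `K ⊗ J` for a `2 × 2` block `K`, where `J = !![0, 1; -1, 0]`
satisfies `J ^ 2 = -1`; so `(K ⊗ J) (L ⊗ J) = -(K L ⊗ 1)`. The block of `S` is the scalar `α`,
hence `S` commutes with `N`; the block of `N` has vanishing trace and determinant (because
`√(R1 R2) ^ 2 = R1 R2`), hence squares to zero by Cayley–Hamilton, and so does `N`. Finally
`A = S + N` amounts to the diagonal entries of the block of `A` being `α ∓ t3 / √(R1 R2)`,
which is what the choice of `t4` and `α` achieves.
-/

open Matrix Kronecker

variable {R : Type*} [CommRing R]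

theorem Matrix.sq_eq_zero_of_trace_eq_zero_of_det_eq_zero [Nontrivial R]
    (M : Matrix (Fin 2) (Fin 2) R) (ht : M.trace = 0) (hd : M.det = 0) : M ^ 2 = 0 := by
  simpa [charpoly_fin_two, ht, hd] using aeval_self_charpoly M

def kronJ (K : Matrix (Fin 2) (Fin 2) R) : Matrix (Fin 4) (Fin 4) R :=
  reindexAlgEquiv R R finProdFinEquiv (K ⊗ₖ !![0, 1; -1, 0])

theorem kronJ_of (a b c d : R) :
    kronJ !![a, b; c, d] = !![0, a, 0, b; -a, 0, -b, 0; 0, c, 0, d; -c, 0, -d, 0] := by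
  ext i j
  fin_cases i <;> fin_cases j <;> simp [kronJ, finProdFinEquiv, Fin.divNat, Fin.modNat]

theorem kronJ_add (K L : Matrix (Fin 2) (Fin 2) R) : kronJ (K + L) = kronJ K + kronJ L := by
  simp only [kronJ, add_kronecker, map_add]

theorem kronJ_mul (K L : Matrix (Fin 2) (Fin 2) R) :
    kronJ K * kronJ L =
      reindexAlgEquiv R R finProdFinEquiv ((K * L) ⊗ₖ (-1 : Matrix (Fin 2) (Fin 2) R)) := by
  have hJ : !![(0 : R), 1; -1, 0] * !![0, 1; -1, 0] = -1 := by simp [one_fin_two]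
  rw [kronJ, kronJ, ← map_mul, ← mul_kronecker_mul, hJ]

theorem Commute.kronJ {K L : Matrix (Fin 2) (Fin 2) R} (h : Commute K L) :
    Commute (kronJ K) (kronJ L) := by
  rw [Commute, SemiconjBy, kronJ_mul, kronJ_mul, h.eq]

theorem kronJ_sq_eq_zero {K : Matrix (Fin 2) (Fin 2) R} (h : K ^ 2 = 0) : kronJ K ^ 2 = 0 := by
  rw [sq, kronJ_mul, ← sq K, h, zero_kronecker, map_zero]

theorem stmt2_general (R1 R2 w t1 t2 t3 t4 α : ℝ) (hR1 : 0 < R1) (hR2 : 0 < R2)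
    (ht4 : t4 = (w * (t1 * R2 - t2 * R1) + 2 * t3 * Real.sqrt (R1 * R2)) / (R1 + R2))
    (hα : α = (w * (t1 + t2) * Real.sqrt (R1 * R2) + t3 * (R1 - R2)) /
      (Real.sqrt (R1 * R2) * (R1 + R2)))
    (A S N : Matrix (Fin 4) (Fin 4) ℝ)
    (hA : A = !![0, (w * t1 - t4) / R1, 0, -t3 / R1;
        -(w * t1 - t4) / R1, 0, t3 / R1, 0;
        0, t3 / R2, 0, (w * t2 + t4) / R2;
        -t3 / R2, 0, -(w * t2 + t4) / R2, 0])
    (hSm : S = !![0, α, 0, 0;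
        -α, 0, 0, 0;
        0, 0, 0, α;
        0, 0, -α, 0])
    (hNm : N = !![0, -t3 / Real.sqrt (R1 * R2), 0, -t3 / R1;
        t3 / Real.sqrt (R1 * R2), 0, t3 / R1, 0;
        0, t3 / R2, 0, t3 / Real.sqrt (R1 * R2);
        -t3 / R2, 0, -t3 / Real.sqrt (R1 * R2), 0]) :
    A = S + N ∧ S * N = N * S ∧ N ^ 2 = 0 := by
  set s := Real.sqrt (R1 * R2)
  have hs : 0 < s := Real.sqrt_pos.mpr (by positivity)
  have hss : s * s = R1 * R2 := Real.mul_self_sqrt (by positivity)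
  have hA₁ : (w * t1 - t4) / R1 = α - t3 / s := by
    rw [ht4, hα]
    field_simp
    linear_combination (-2 * t3) * hss
  have hA₂ : (w * t2 + t4) / R2 = α + t3 / s := by
    rw [ht4, hα]
    field_simp
    linear_combination (2 * t3) * hss
  set K : Matrix (Fin 2) (Fin 2) ℝ := !![-t3 / s, -t3 / R1; t3 / R2, t3 / s]
  have hS : S = kronJ (scalar (Fin 2) α) := by
    rw [hSm, scalar_apply, diagonal_fin_two, kronJ_of, neg_zero]
  have hN : N = kronJ K := by
    simp only [hNm, K, kronJ_of, neg_div, neg_neg]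
  refine ⟨?_, ?_, ?_⟩
  · have hSK : scalar (Fin 2) α + K = !![α - t3 / s, -t3 / R1; t3 / R2, α + t3 / s] := by
      simp only [K, scalar_apply, diagonal_fin_two, of_add_of, cons_add_cons, empty_add_empty,
        zero_add, neg_div, sub_eq_add_neg]
    rw [hS, hN, ← kronJ_add, hSK, kronJ_of]
    simp only [hA, neg_div, neg_neg, hA₁, hA₂]
  · rw [hS, hN]
    exact (scalar_commute α (Commute.all α) K).kronJ
  · rw [hN]
    refine kronJ_sq_eq_zero (sq_eq_zero_of_trace_eq_zero_of_det_eq_zero K ?_ ?_)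
    · rw [trace_fin_two_of, neg_div, neg_add_cancel]
    · rw [det_fin_two_of, div_mul_div_comm, div_mul_div_comm, hss]
      ring

theorem stmt2 (R1 R2 w t1 t2 t3 t4 α : ℝ) (hR1 : 0 < R1) (hR2 : 0 < R2) (ht3 : t3 ≠ 0)
    (ht4 : t4 = (w * (t1 * R2 - t2 * R1) + 2 * t3 * Real.sqrt (R1 * R2)) / (R1 + R2))
    (hα : α = (w * (t1 + t2) * Real.sqrt (R1 * R2) + t3 * (R1 - R2)) /
      (Real.sqrt (R1 * R2) * (R1 + R2)))
    (A S N : Matrix (Fin 4) (Fin 4) ℝ)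
    (hA : A = !![0, (w * t1 - t4) / R1, 0, -t3 / R1;
        -(w * t1 - t4) / R1, 0, t3 / R1, 0;
        0, t3 / R2, 0, (w * t2 + t4) / R2;
        -t3 / R2, 0, -(w * t2 + t4) / R2, 0])
    (hSm : S = !![0, α, 0, 0;
        -α, 0, 0, 0;
        0, 0, 0, α;
        0, 0, -α, 0])
    (hNm : N = !![0, -t3 / Real.sqrt (R1 * R2), 0, -t3 / R1;
        t3 / Real.sqrt (R1 * R2), 0, t3 / R1, 0;
        0, t3 / R2, 0, t3 / Real.sqrt (R1 * R2);
        -t3 / R2, 0, -t3 / Real.sqrt (R1 * R2), 0]) :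
    A = S + N ∧ S * N = N * S ∧ N ^ 2 = 0 :=
  stmt2_general R1 R2 w t1 t2 t3 t4 α hR1 hR2 ht4 hα A S N hA hSm hNm
end

section
/- With the symplectic basis P = col(f, (1/α)Sf, Nf, (1/α)SNf) as above, the conjugated matrix P⁻¹ A P, where A = S + N is the Gaudin linearisation at m0 at the bifurcation value t4 = t4^+_{m0}, equals the 4×4 matrix ((0,-α,0,0),(α,0,0,0),(1,0,0,-α),(0,1,α,0)), which is the linear normal form of a Hamiltonian Hopf bifurcation. -/
/-!
The semisimple part satisfies `S² = -α²`, commutes with `N`, and `N² = 0`. These three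
relations alone force `S + N` to act on the columns `f, Sf/α, Nf, SNf/α` of `P` as the normal
form prescribes, i.e. `(S + N) P = P J`. For the explicit `S`, `N` and `f = (x, 0, y, 0)`, the
determinant of `P` is the square of the quadratic form `c x² + 2 a x y + b y²` built from the
entries of `N`, which equals `4 β² t₃ ≠ 0`, so `P` is invertible.
-/

open Matrix

section Field

variable {R : Type*} [Field R]

def hopfBasis {n : Type*} [Fintype n] (S N : Matrix n n R) (α : R) (f : n → R) :
    Matrix n (Fin 4) R :=
  Matrix.of fun i j => ![f, (1 / α) • (S *ᵥ f), N *ᵥ f, (1 / α) • (S *ᵥ (N *ᵥ f))] j i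

def hopfNormalForm (α : R) : Matrix (Fin 4) (Fin 4) R :=
  !![0, -α, 0, 0; α, 0, 0, 0; 1, 0, 0, -α; 0, 1, α, 0]

theorem mul_hopfBasis {n : Type*} [Fintype n] [DecidableEq n] {S N : Matrix n n R} {α : R}
    (hα : α ≠ 0) (hS : S * S = -(α ^ 2) • 1) (hSN : Commute S N) (hN : N * N = 0) (f : n → R) :
    (S + N) * hopfBasis S N α f = hopfBasis S N α f * hopfNormalForm α := by
  have hSS : ∀ v, S *ᵥ (S *ᵥ v) = -(α ^ 2) • v := fun v => by
    rw [mulVec_mulVec, hS, smul_mulVec, one_mulVec]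
  have hNN : ∀ v, N *ᵥ (N *ᵥ v) = 0 := fun v => by
    rw [mulVec_mulVec, hN, zero_mulVec]
  have hNS : ∀ v, N *ᵥ (S *ᵥ v) = S *ᵥ (N *ᵥ v) := fun v => by
    rw [mulVec_mulVec, mulVec_mulVec, hSN.eq]
  set col : Fin 4 → n → R := ![f, (1 / α) • (S *ᵥ f), N *ᵥ f, (1 / α) • (S *ᵥ (N *ᵥ f))]
  suffices hcol : ∀ j, (S + N) *ᵥ col j = ∑ k, hopfNormalForm α k j • col k by
    ext i j
    change ((S + N) *ᵥ col j) i = ∑ k, col k i * hopfNormalForm α k j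
    simp only [hcol j, Finset.sum_apply, Pi.smul_apply, smul_eq_mul, mul_comm]
  intro j
  fin_cases j <;>
    simp only [Fin.sum_univ_four, hopfNormalForm, col, Fin.reduceFinMk, Fin.isValue, cons_val,
      of_apply, zero_smul, one_smul, zero_add, add_zero, add_mulVec, mulVec_smul, hSS, hNN, hNS,
      mulVec_zero] <;>
    match_scalars <;> field_simp

end Field

section CommRing

variable {R : Type*} [CommRing R]

def semisimplePart (α : R) : Matrix (Fin 4) (Fin 4) R :=
  !![0, α, 0, 0; -α, 0, 0, 0; 0, 0, 0, α; 0, 0, -α, 0]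

def nilpotentPart (a b c : R) : Matrix (Fin 4) (Fin 4) R :=
  !![0, -a, 0, -b; a, 0, b, 0; 0, c, 0, a; -c, 0, -a, 0]

theorem semisimplePart_mul_self (α : R) :
    semisimplePart α * semisimplePart α = -(α ^ 2) • 1 := by
  ext i j
  fin_cases i <;> fin_cases j <;> simp [semisimplePart, mul_apply, Fin.sum_univ_four, sq]

theorem commute_semisimplePart_nilpotentPart (α a b c : R) :
    Commute (semisimplePart α) (nilpotentPart a b c) := by
  ext i j
  fin_cases i <;> fin_cases j <;>
    simp [semisimplePart, nilpotentPart, mul_apply, Fin.sum_univ_four] <;> ring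

theorem nilpotentPart_mul_self {a b c : R} (h : a ^ 2 = b * c) :
    nilpotentPart a b c * nilpotentPart a b c = 0 := by
  ext i j
  fin_cases i <;> fin_cases j <;> simp [nilpotentPart, mul_apply, Fin.sum_univ_four] <;> grind

end CommRing

section Field

variable {R : Type*} [Field R]

theorem hopfBasis_semisimplePart_nilpotentPart {α : R} (hα : α ≠ 0) (a b c x y : R) :
    hopfBasis (semisimplePart α) (nilpotentPart a b c) α ![x, 0, y, 0] =
      !![x, 0, 0, a * x + b * y; 0, -x, a * x + b * y, 0;
        y, 0, 0, -(c * x + a * y); 0, -y, -(c * x + a * y), 0] := by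
  ext i j
  fin_cases i <;> fin_cases j <;>
    simp [hopfBasis, semisimplePart, nilpotentPart, dotProduct, Fin.sum_univ_four] <;>
    field_simp <;> ring

theorem det_hopfBasis_semisimplePart_nilpotentPart {α : R} (hα : α ≠ 0) (a b c x y : R) :
    (hopfBasis (semisimplePart α) (nilpotentPart a b c) α ![x, 0, y, 0]).det =
      (c * x ^ 2 + 2 * a * x * y + b * y ^ 2) ^ 2 := by
  rw [hopfBasis_semisimplePart_nilpotentPart hα, det_succ_row_zero]
  simp [Fin.sum_univ_four, det_fin_three, Fin.succAbove]
  ring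

end Field

theorem stmt7_general (R1 R2 t3 α β : ℝ) (hR1 : 0 < R1) (hR2 : 0 < R2) (ht3 : t3 ≠ 0)
    (hα0 : α ≠ 0)
    (hβ : β = (1 / 2) * (R1 * R2 * t3 ^ 2) ^ (-(1 / 4 : ℝ)))
    (S N : Matrix (Fin 4) (Fin 4) ℝ)
    (hS : S = !![0, α, 0, 0;
        -α, 0, 0, 0;
        0, 0, 0, α;
        0, 0, -α, 0])
    (hN : N = !![0, -t3 / Real.sqrt (R1 * R2), 0, -t3 / R1;
        t3 / Real.sqrt (R1 * R2), 0, t3 / R1, 0;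
        0, t3 / R2, 0, t3 / Real.sqrt (R1 * R2);
        -t3 / R2, 0, -t3 / Real.sqrt (R1 * R2), 0])
    (f : Fin 4 → ℝ)
    (hf : f = fun i => β * ![Real.sqrt R2, 0, Real.sqrt R1, 0] i)
    (P : Matrix (Fin 4) (Fin 4) ℝ)
    (hP : P = Matrix.of fun i j =>
      ![f, (1 / α) • (S *ᵥ f), N *ᵥ f, (1 / α) • (S *ᵥ (N *ᵥ f))] j i) :
    P⁻¹ * (S + N) * P = !![0, -α, 0, 0;
        α, 0, 0, 0;
        1, 0, 0, -α;
        0, 1, α, 0] := by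
  set a := t3 / Real.sqrt (R1 * R2)
  have hS' : S = semisimplePart α := hS
  have hN' : N = nilpotentPart a (t3 / R1) (t3 / R2) := by
    rw [hN, nilpotentPart]
    simp only [neg_div, a]
  have hf' : f = ![β * Real.sqrt R2, 0, β * Real.sqrt R1, 0] := by
    ext i
    fin_cases i <;> simp [hf]
  have hP' : P = hopfBasis S N α f := hP
  have ha : a ^ 2 = t3 / R1 * (t3 / R2) := by
    rw [div_pow, Real.sq_sqrt (by positivity)]
    field_simp
  have hβ0 : β ≠ 0 := by
    rw [hβ]
    positivity
  have hform : t3 / R2 * (β * √R2) ^ 2 + 2 * a * (β * √R2) * (β * √R1) + t3 / R1 * (β * √R1) ^ 2 =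
      4 * β ^ 2 * t3 := by
    simp only [a, mul_pow, Real.sq_sqrt hR1.le, Real.sq_sqrt hR2.le, Real.sqrt_mul hR1.le]
    field_simp
    ring
  have hdet : IsUnit P.det := by
    rw [hP', hS', hN', hf', det_hopfBasis_semisimplePart_nilpotentPart hα0, hform,
      isUnit_iff_ne_zero]
    positivity
  have hconj : (S + N) * P = P * hopfNormalForm α := by
    rw [hP', hS', hN']
    exact mul_hopfBasis hα0 (semisimplePart_mul_self α)
      (commute_semisimplePart_nilpotentPart _ _ _ _) (nilpotentPart_mul_self ha) f
  rw [Matrix.mul_assoc, hconj]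
  exact nonsing_inv_mul_cancel_left _ _ hdet

theorem stmt7 (R1 R2 w t1 t2 t3 α β : ℝ) (hR1 : 0 < R1) (hR2 : 0 < R2) (ht3 : t3 ≠ 0)
    (hα : α = (w * (t1 + t2) * Real.sqrt (R1 * R2) + t3 * (R1 - R2)) /
      (Real.sqrt (R1 * R2) * (R1 + R2)))
    (hα0 : α ≠ 0)
    (hβ : β = (1 / 2) * (R1 * R2 * t3 ^ 2) ^ (-(1 / 4 : ℝ)))
    (S N : Matrix (Fin 4) (Fin 4) ℝ)
    (hS : S = !![0, α, 0, 0;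
        -α, 0, 0, 0;
        0, 0, 0, α;
        0, 0, -α, 0])
    (hN : N = !![0, -t3 / Real.sqrt (R1 * R2), 0, -t3 / R1;
        t3 / Real.sqrt (R1 * R2), 0, t3 / R1, 0;
        0, t3 / R2, 0, t3 / Real.sqrt (R1 * R2);
        -t3 / R2, 0, -t3 / Real.sqrt (R1 * R2), 0])
    (f : Fin 4 → ℝ)
    (hf : f = fun i => β * ![Real.sqrt R2, 0, Real.sqrt R1, 0] i)
    (P : Matrix (Fin 4) (Fin 4) ℝ)
    (hP : P = Matrix.of fun i j =>
      ![f, (1 / α) • (S *ᵥ f), N *ᵥ f, (1 / α) • (S *ᵥ (N *ᵥ f))] j i) :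
    P⁻¹ * (S + N) * P = !![0, -α, 0, 0;
        α, 0, 0, 0;
        1, 0, 0, -α;
        0, 1, α, 0] :=
  stmt7_general R1 R2 t3 α β hR1 hR2 ht3 hα0 hβ S N hS hN f hf P hP
end

section
/- Let R1, R2 > 0, t3 ≠ 0 and define ν2(t4) = -((w t1 - t4)² R2² + (w t2 + t4)² R1² - 2 R1 R2 ((w t1 - t4)(w t2 + t4) + 2 t3²)) / (4 R1² R2²). Then ν2(t4^+_{m0}) = 0, where t4^+_{m0} = (w(t1 R2 - t2 R1) + 2 t3 √(R1 R2))/(R1 + R2), and dν2/dt4 evaluated at t4 = t4^+_{m0} equals -t3(R1 + R2)/(R1 R2)^{3/2}, which is nonzero. -/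
/-!
Completing the square, the numerator of `ν2` is `L(t4)² - 4 R1 R2 t3²` with
`L(t4) = w (t1 R2 - t2 R1) - t4 (R1 + R2)`. The point `t4^+` is where `L = -2 t3 √(R1 R2)`, so
`ν2` vanishes there, and `ν2' = (R1 + R2) L / (2 R1² R2²)` evaluates to
`-t3 (R1 + R2) √(R1 R2) / (R1 R2)² = -t3 (R1 + R2) / (R1 R2)^(3/2)`.
-/

open Real

lemma hasDerivAt_neg_sq_sub_div (c k e D t : ℝ) :
    HasDerivAt (fun t => -((c - t * k) ^ 2 - e) / D) (2 * k * (c - t * k) / D) t := by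
  have h : HasDerivAt (fun t => -((c - t * k) ^ 2 - e) / D) _ t :=
    (((((hasDerivAt_id' t).mul_const k).const_sub c).pow 2).sub_const e).neg.div_const D
  exact h.congr_deriv (by ring)

section Gaudin

variable (R1 R2 w t1 t2 t3 : ℝ)

noncomputable def gaudinNu2 (t4 : ℝ) : ℝ :=
  -(((w * t1 - t4) ^ 2 * R2 ^ 2 + (w * t2 + t4) ^ 2 * R1 ^ 2 -
      2 * R1 * R2 * ((w * t1 - t4) * (w * t2 + t4) + 2 * t3 ^ 2)) / (4 * R1 ^ 2 * R2 ^ 2))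

lemma gaudinNu2_eq_neg_sq_sub_div (t4 : ℝ) :
    gaudinNu2 R1 R2 w t1 t2 t3 t4 =
      -((w * (t1 * R2 - t2 * R1) - t4 * (R1 + R2)) ^ 2 - 4 * R1 * R2 * t3 ^ 2) /
        (4 * R1 ^ 2 * R2 ^ 2) := by
  unfold gaudinNu2
  ring

lemma hasDerivAt_gaudinNu2 (t4 : ℝ) :
    HasDerivAt (gaudinNu2 R1 R2 w t1 t2 t3)
      (2 * (R1 + R2) * (w * (t1 * R2 - t2 * R1) - t4 * (R1 + R2)) / (4 * R1 ^ 2 * R2 ^ 2)) t4 := by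
  rw [funext (gaudinNu2_eq_neg_sq_sub_div R1 R2 w t1 t2 t3)]
  exact hasDerivAt_neg_sq_sub_div _ _ _ _ t4

end Gaudin

theorem stmt8 (R1 R2 w t1 t2 t3 : ℝ) (hR1 : 0 < R1) (hR2 : 0 < R2) (ht3 : t3 ≠ 0)
    (ν2 : ℝ → ℝ)
    (hν2 : ν2 = fun t4 =>
      -(((w * t1 - t4) ^ 2 * R2 ^ 2 + (w * t2 + t4) ^ 2 * R1 ^ 2 -
          2 * R1 * R2 * ((w * t1 - t4) * (w * t2 + t4) + 2 * t3 ^ 2)) /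
        (4 * R1 ^ 2 * R2 ^ 2)))
    (t4p : ℝ)
    (ht4p : t4p = (w * (t1 * R2 - t2 * R1) + 2 * t3 * Real.sqrt (R1 * R2)) / (R1 + R2)) :
    ν2 t4p = 0 ∧
    deriv ν2 t4p = -(t3 * (R1 + R2)) / (R1 * R2) ^ ((3 : ℝ) / 2) ∧
    -(t3 * (R1 + R2)) / (R1 * R2) ^ ((3 : ℝ) / 2) ≠ 0 := by
  change ν2 = gaudinNu2 R1 R2 w t1 t2 t3 at hν2
  have hRR : 0 < R1 * R2 := mul_pos hR1 hR2
  have hsq : √(R1 * R2) ^ 2 = R1 * R2 := sq_sqrt hRR.le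
  have hpow : (R1 * R2) ^ ((3 : ℝ) / 2) = √(R1 * R2) ^ 3 := by
    rw [rpow_div_two_eq_sqrt _ hRR.le]
    exact_mod_cast rpow_natCast _ 3
  have hL : w * (t1 * R2 - t2 * R1) - t4p * (R1 + R2) = -(2 * t3 * √(R1 * R2)) := by
    rw [ht4p, div_mul_cancel₀ _ (by positivity)]
    ring
  refine ⟨?_, ?_, ?_⟩
  · rw [hν2, gaudinNu2_eq_neg_sq_sub_div, hL, neg_div, neg_eq_zero, div_eq_zero_iff]
    left
    linear_combination 4 * t3 ^ 2 * hsq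
  · rw [hν2, (hasDerivAt_gaudinNu2 R1 R2 w t1 t2 t3 t4p).deriv, hL, hpow]
    field_simp
    linear_combination (-4 * (√(R1 * R2) ^ 2 + R1 * R2)) * hsq
  · rw [hpow]
    exact div_ne_zero (neg_ne_zero.mpr (mul_ne_zero ht3 (by positivity))) (by positivity)
end

section
/- Let R1, R2 > 0 and w, t1, t2, t3, t4 ∈ ℝ with t4 = t4^±_{m0} := (w(t1 R2 - t2 R1) ± 2 t3 √(R1 R2))/(R1 + R2). Then the discriminant of the quadratic in μ = λ² obtained from the characteristic polynomial of the matrix A (rows as above) vanishes; equivalently, the characteristic polynomial of A has a repeated quadratic factor, so m0 is a degenerate singularity. -/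
/-!
Writing `α = (w t1 - t4)/R1`, `β = (w t2 + t4)/R2`, `s = t3/R1`, `u = t3/R2`, the characteristic
polynomial of `A` is `λ⁴ + (α² + β² - 2su) λ² + (αβ + su)²`, whose discriminant in `μ = λ²`
factors as `(α + β)² ((α - β)² - 4su)`. The choice of `t4` is exactly what makes
`(α - β)² = 4su`: clearing denominators, `(α - β) R1 R2 = w (t1 R2 - t2 R1) - t4 (R1 + R2)
= ∓ 2 t3 √(R1 R2)`. Then the characteristic polynomial is the square `(λ² + αβ + su)²`.
-/

open Matrix Polynomial

theorem charpoly_skewBlock {R : Type*} [CommRing R] (α β s u : R) :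
    (!![0, α, 0, -s; -α, 0, s, 0; 0, u, 0, β; -u, 0, -β, 0] : Matrix (Fin 4) (Fin 4) R).charpoly =
      X ^ 4 + C (α ^ 2 + β ^ 2 - 2 * s * u) * X ^ 2 + C ((α * β + s * u) ^ 2) := by
  simp [Matrix.charpoly, Matrix.charmatrix_apply, Matrix.det_succ_row_zero,
    Fin.sum_univ_succ, Matrix.diagonal_apply, Fin.succAbove, map_ofNat]
  ring

theorem charpoly_skewBlock_eq_sq {R : Type*} [CommRing R] {α β s u : R}
    (h : (α - β) ^ 2 = 4 * s * u) :
    (!![0, α, 0, -s; -α, 0, s, 0; 0, u, 0, β; -u, 0, -β, 0] : Matrix (Fin 4) (Fin 4) R).charpoly =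
      (X ^ 2 + C (α * β + s * u)) ^ 2 := by
  rw [charpoly_skewBlock, show α ^ 2 + β ^ 2 - 2 * s * u = 2 * (α * β + s * u) by
    linear_combination h]
  simp only [C_mul, C_pow, C_ofNat]
  ring

theorem sq_eq_four_mul_of_sq_eq_quartic {R : Type*} [CommRing R] {a b c : R}
    (h : (X ^ 2 + C c) ^ 2 = X ^ 4 + C a * X ^ 2 + C b) : a ^ 2 = 4 * b := by
  have h' : C (2 * c) * X ^ 2 + C (c ^ 2) = C a * X ^ 2 + C b := by
    simp only [C_mul, C_pow, C_ofNat]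
    linear_combination h
  have ha : 2 * c = a := by
    simpa [coeff_C, -map_mul, -map_pow] using congrArg (coeff · 2) h'
  have hb : c ^ 2 = b := by
    simpa [coeff_C, -map_mul, -map_pow] using congrArg (coeff · 0) h'
  rw [← ha, ← hb]
  ring

theorem sq_sub_eq_of_t4 {R1 R2 w t1 t2 t3 t4 : ℝ} (hR1 : 0 < R1) (hR2 : 0 < R2)
    (ht4 : t4 = (w * (t1 * R2 - t2 * R1) + 2 * t3 * Real.sqrt (R1 * R2)) / (R1 + R2) ∨
           t4 = (w * (t1 * R2 - t2 * R1) - 2 * t3 * Real.sqrt (R1 * R2)) / (R1 + R2)) :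
    ((w * t1 - t4) / R1 - (w * t2 + t4) / R2) ^ 2 = 4 * (t3 / R1) * (t3 / R2) := by
  set r := Real.sqrt (R1 * R2)
  have hr : r ^ 2 = R1 * R2 := Real.sq_sqrt (by positivity)
  have hlin : (w * t1 - t4) * R2 - (w * t2 + t4) * R1 = -(2 * t3 * r) ∨
      (w * t1 - t4) * R2 - (w * t2 + t4) * R1 = 2 * t3 * r := by
    rcases ht4 with h | h <;> [left; right] <;>
    · rw [h]
      field_simp
      ring
  have hnum : ((w * t1 - t4) * R2 - (w * t2 + t4) * R1) ^ 2 = 4 * t3 ^ 2 * (R1 * R2) := by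
    rcases hlin with h | h <;>
    · rw [h]
      linear_combination 4 * t3 ^ 2 * hr
  field_simp
  linear_combination hnum

theorem stmt11 (R1 R2 w t1 t2 t3 t4 : ℝ) (hR1 : 0 < R1) (hR2 : 0 < R2)
    (ht4 : t4 = (w * (t1 * R2 - t2 * R1) + 2 * t3 * Real.sqrt (R1 * R2)) / (R1 + R2) ∨
           t4 = (w * (t1 * R2 - t2 * R1) - 2 * t3 * Real.sqrt (R1 * R2)) / (R1 + R2))
    (A : Matrix (Fin 4) (Fin 4) ℝ)
    (hA : A = !![0, (w * t1 - t4) / R1, 0, -t3 / R1;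
        -(w * t1 - t4) / R1, 0, t3 / R1, 0;
        0, t3 / R2, 0, (w * t2 + t4) / R2;
        -t3 / R2, 0, -(w * t2 + t4) / R2, 0]) :
    (∀ a b : ℝ, A.charpoly = X ^ 4 + C a * X ^ 2 + C b → a ^ 2 = 4 * b) ∧
    ∃ c : ℝ, A.charpoly = (X ^ 2 + C c) ^ 2 := by
  simp only [neg_div] at hA
  have hsq := hA ▸ charpoly_skewBlock_eq_sq (sq_sub_eq_of_t4 hR1 hR2 ht4)
  exact ⟨fun a b h ↦ sq_eq_four_mul_of_sq_eq_quartic (hsq.symm.trans h), _, hsq⟩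
end

section
/- Let R1, R2 > 0 with R1 ≠ R2 and consider the trigonometric Gaudin model (w = 0) with t3 = -2(R1 + R2) t0 / √(R1 R2) and t0 ≠ 0. Then the coefficient a3 (of M²) in the normal form at t4 = t4^+_{m0} = 4 t0 vanishes, while the coefficient a6 of M³, given by a6 = (R1 - R2)² · ((R1 + R2)(R1 - R2)² t0) / (384 (R1 R2)² (R1 + R2)(R1 - R2)² t0) = (R1 - R2)²/(384 (R1 R2)²), is nonzero; hence the Hamiltonian Hopf bifurcation at m0 is degenerate. -/
theorem stmt15 (R1 R2 t0 t3 : ℝ) (hR1 : 0 < R1) (hR2 : 0 < R2) (hR : R1 ≠ R2)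
    (ht0 : t0 ≠ 0)
    (ht3 : t3 = -(2 * (R1 + R2) * t0) / Real.sqrt (R1 * R2))
    (a3 a6 : ℝ)
    (ha3 : a3 = (2 * (R1 - R2) ^ 2 * (R1 + R2) * t0 + (R1 - R2) ^ 2 * Real.sqrt (R1 * R2) * t3) /
      (8 * (R1 * R2) ^ ((3 : ℝ) / 2) * (R1 + R2) * t3))
    (ha6 : a6 = (R1 - R2) ^ 2 * ((R1 + R2) * (R1 - R2) ^ 2 * t0) /
      (384 * (R1 * R2) ^ 2 * ((R1 + R2) * (R1 - R2) ^ 2 * t0))) :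
    a3 = 0 ∧ a6 = (R1 - R2) ^ 2 / (384 * (R1 * R2) ^ 2) ∧ a6 ≠ 0 := by
  have hR12 : R1 - R2 ≠ 0 := sub_ne_zero.2 hR
  have hsqrt_t3 : Real.sqrt (R1 * R2) * t3 = -(2 * (R1 + R2) * t0) := by
    rw [ht3, mul_div_cancel₀ _ (Real.sqrt_pos.2 (mul_pos hR1 hR2)).ne']
  have hcommon : (R1 + R2) * (R1 - R2) ^ 2 * t0 ≠ 0 := by positivity
  have ha6' : a6 = (R1 - R2) ^ 2 / (384 * (R1 * R2) ^ 2) :=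
    ha6.trans (mul_div_mul_right _ _ hcommon)
  refine ⟨?_, ha6', ?_⟩
  · rw [ha3, div_eq_zero_iff]
    left
    linear_combination (R1 - R2) ^ 2 * hsqrt_t3
  · rw [ha6']
    positivity
end
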